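/- arXiv:2605.21992 — 11 statements merged into one kernel-verified Lean document; each statement's English description precedes it below -/
import Mathlib

section
/- Let (g, [·,·]) be a Lie algebra and R : g → g a Rota-Baxter operator of weight 1. Then defining x ▷ y := [R(x), y] makes (g, [·,·], ▷) a post-Lie algebra. -/
/-- A Rota-Baxter operator `Rop` of weight 1 on a Lie algebra induces a post-Lie
structure via `x ▷ y := ⁅Rop x, y⁆`. -/
theorem stmt_3 {R L : Type*} [CommRing R] [LieRing L] [LieAlgebra R L]
    (Rop : L →ₗ[R] L)
    (hRB : ∀ x y : L, ⁅Rop x, Rop y⁆ = Rop (⁅Rop x, y⁆ + ⁅x, Rop y⁆ + ⁅x, y⁆)) :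
    (∀ x y z : L, ⁅Rop x, ⁅y, z⁆⁆ = ⁅⁅Rop x, y⁆, z⁆ + ⁅y, ⁅Rop x, z⁆⁆) ∧
    (∀ x y z : L, ⁅Rop (⁅x, y⁆ + ⁅Rop x, y⁆ - ⁅Rop y, x⁆), z⁆ =
      ⁅Rop x, ⁅Rop y, z⁆⁆ - ⁅Rop y, ⁅Rop x, z⁆⁆) := by
  constructor
  · intro x y z; rw [leibniz_lie]
  · intro x y z
    have h : Rop (⁅x, y⁆ + ⁅Rop x, y⁆ - ⁅Rop y, x⁆) = ⁅Rop x, Rop y⁆ := by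
      rw [hRB]
      congr 1
      rw [← lie_skew (Rop y) x]
      abel
    rw [h, lie_lie]
end

section
/- Let (g, [·,·]) be a Lie algebra and R₁, R₂ two Rota-Baxter operators of weight 1. Then [R₁(x),y] = [R₂(x),y] for all x,y ∈ g if and only if the map t := R₂ − R₁ takes values in the center Z(g) and vanishes on all brackets of the sub-adjacent Lie algebra, i.e., t([R₁(x),y] + [x,R₁(y)] + [x,y]) = 0 for all x,y ∈ g. -/
/-- Two Rota-Baxter operators of weight 1 induce the same post-Lie product
`x ▷ y = ⁅Rᵢ x, y⁆` iff `t := R₂ − R₁` takes values in the center and vanishes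
on all sub-adjacent brackets (i.e. it is a 1-cocycle with values in the trivial
module `Z(g)`). -/
theorem stmt_5 {R L : Type*} [CommRing R] [LieRing L] [LieAlgebra R L]
    (R₁ R₂ : L →ₗ[R] L)
    (hRB₁ : ∀ x y : L, ⁅R₁ x, R₁ y⁆ = R₁ (⁅R₁ x, y⁆ + ⁅x, R₁ y⁆ + ⁅x, y⁆))
    (hRB₂ : ∀ x y : L, ⁅R₂ x, R₂ y⁆ = R₂ (⁅R₂ x, y⁆ + ⁅x, R₂ y⁆ + ⁅x, y⁆)) :
    (∀ x y : L, ⁅R₁ x, y⁆ = ⁅R₂ x, y⁆) ↔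
    ((∀ x z : L, ⁅(R₂ - R₁) x, z⁆ = 0) ∧
     (∀ x y : L, (R₂ - R₁) (⁅R₁ x, y⁆ + ⁅x, R₁ y⁆ + ⁅x, y⁆) = 0)) := by
  constructor
  · intro h
    have hc : ∀ x z : L, ⁅(R₂ - R₁) x, z⁆ = 0 := by
      intro x z
      simp [sub_lie, (h x z).symm]
    refine ⟨hc, fun x y => ?_⟩
    have hr : ⁅x, R₁ y⁆ = ⁅x, R₂ y⁆ := by
      rw [← lie_skew, ← lie_skew x (R₂ y), h y x]
    have key : ⁅R₂ x, R₂ y⁆ = ⁅R₁ x, R₁ y⁆ := by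
      rw [← h x (R₂ y), ← lie_skew, ← h y (R₁ x), lie_skew]
    have := hRB₂ x y
    rw [← h x y, ← hr, key, hRB₁ x y] at this
    simp only [LinearMap.sub_apply]
    rw [← this, sub_self]
  · rintro ⟨hc, -⟩ x y
    have := hc x y
    simp only [LinearMap.sub_apply, sub_lie] at this
    exact (sub_eq_zero.mp this).symm
end

section
/- Let (g, [·,·], ▷) be an inner post-Lie algebra, witnessed by a linear map φ : g → g with x▷y = [φ(x), y] for all x,y. Define κ : g × g → g by κ(x,y) = [φ(x), φ(y)] − φ([x,y]_▷), where [x,y]_▷ = x▷y − y▷x + [x,y]. Then κ takes values in the center Z(g). -/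
/-- For an inner post-Lie algebra with witness `φ` (`x ▷ y = ⁅φ x, y⁆`), the map
`κ(x,y) = ⁅φ x, φ y⁆ − φ([x,y]_▷)` takes values in the center `Z(g)`. -/
theorem stmt_6 {R L : Type*} [CommRing R] [LieRing L] [LieAlgebra R L]
    (t : L →ₗ[R] L →ₗ[R] L)
    (h1 : ∀ x y z : L, t x ⁅y, z⁆ = ⁅t x y, z⁆ + ⁅y, t x z⁆)
    (h2 : ∀ x y z : L, t (⁅x, y⁆ + t x y - t y x) z = t x (t y z) - t y (t x z))
    (φ : L →ₗ[R] L) (hφ : ∀ x y : L, t x y = ⁅φ x, y⁆) :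
    ∀ x y z : L, ⁅⁅φ x, φ y⁆ - φ (t x y - t y x + ⁅x, y⁆), z⁆ = 0 := by
  intro x y z
  have harg : ⁅φ x, y⁆ - ⁅φ y, x⁆ + ⁅x, y⁆ = ⁅x, y⁆ + ⁅φ x, y⁆ - ⁅φ y, x⁆ := by abel
  have key := h2 x y z
  simp only [hφ] at key ⊢
  rw [sub_lie, harg, key, lie_lie]
  abel
end

section
/- Let (g, [·,·], ▷) be an inner post-Lie algebra with x▷y = [φ(x),y] for a linear map φ, and let κ(x,y) = [φ(x),φ(y)] − φ([x,y]_▷) where [x,y]_▷ = x▷y − y▷x + [x,y]. Then κ is a 2-cocycle on the sub-adjacent Lie algebra g_▷ with coefficients in the trivial module Z(g): it is skew-symmetric and κ([x,y]_▷, z) + κ([y,z]_▷, x) + κ([z,x]_▷, y) = 0 for all x,y,z ∈ g. -/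
/-- For an inner post-Lie algebra with witness `φ`, the map
`κ(x,y) = ⁅φ x, φ y⁆ − φ([x,y]_▷)` is a 2-cocycle on the sub-adjacent Lie algebra
with coefficients in the trivial module `Z(g)`: it is skew-symmetric and satisfies
the cyclic cocycle identity. -/
theorem stmt_7 {R L : Type*} [CommRing R] [LieRing L] [LieAlgebra R L]
    (t : L →ₗ[R] L →ₗ[R] L)
    (h1 : ∀ x y z : L, t x ⁅y, z⁆ = ⁅t x y, z⁆ + ⁅y, t x z⁆)
    (h2 : ∀ x y z : L, t (⁅x, y⁆ + t x y - t y x) z = t x (t y z) - t y (t x z))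
    (φ : L →ₗ[R] L) (hφ : ∀ x y : L, t x y = ⁅φ x, y⁆) :
    (∀ x y : L,
      (fun a b : L => ⁅φ a, φ b⁆ - φ (t a b - t b a + ⁅a, b⁆)) x y =
        - (fun a b : L => ⁅φ a, φ b⁆ - φ (t a b - t b a + ⁅a, b⁆)) y x) ∧
    (∀ x y z : L,
      (fun a b : L => ⁅φ a, φ b⁆ - φ (t a b - t b a + ⁅a, b⁆))
          (t x y - t y x + ⁅x, y⁆) z +
      (fun a b : L => ⁅φ a, φ b⁆ - φ (t a b - t b a + ⁅a, b⁆))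
          (t y z - t z y + ⁅y, z⁆) x +
      (fun a b : L => ⁅φ a, φ b⁆ - φ (t a b - t b a + ⁅a, b⁆))
          (t z x - t x z + ⁅z, x⁆) y = 0) := by
  have h2' : ∀ x y z : L, t (t x y - t y x + ⁅x, y⁆) z = t x (t y z) - t y (t x z) := by
    intro x y z
    have harg : t x y - t y x + ⁅x, y⁆ = ⁅x, y⁆ + t x y - t y x := by abel
    rw [harg, h2]
  have jac : ∀ a b c : L, ⁅⁅a, b⁆, c⁆ + ⁅⁅b, c⁆, a⁆ + ⁅⁅c, a⁆, b⁆ = 0 := by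
    intro a b c
    rw [← lie_skew ⁅a, b⁆ c, ← lie_skew ⁅b, c⁆ a, ← lie_skew ⁅c, a⁆ b]
    have e : -⁅c, ⁅a, b⁆⁆ + -⁅a, ⁅b, c⁆⁆ + -⁅b, ⁅c, a⁆⁆
        = -(⁅a, ⁅b, c⁆⁆ + ⁅b, ⁅c, a⁆⁆ + ⁅c, ⁅a, b⁆⁆) := by abel
    rw [e, lie_jacobi, neg_zero]
  constructor
  · intro x y
    simp only
    rw [← lie_skew (φ x) (φ y), ← lie_skew x y]
    simp only [map_sub, map_add, map_neg]
    abel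
  · intro x y z
    simp only
    set B : L → L → L := fun a b => t a b - t b a + ⁅a, b⁆ with hBdef
    have hkey : ∀ a b c : L, ⁅φ (B a b), c⁆ = ⁅φ a, ⁅φ b, c⁆⁆ - ⁅φ b, ⁅φ a, c⁆⁆ := by
      intro a b c
      have h := h2' a b c
      rw [hφ (B a b) c, hφ b c, hφ a c, hφ a ⁅φ b, c⁆, hφ b ⁅φ a, c⁆] at h
      exact h
    have jac2 : ⁅⁅x, y⁆, z⁆ = -⁅⁅y, z⁆, x⁆ - ⁅⁅z, x⁆, y⁆ := by
      have h := jac x y z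
      rw [eq_sub_iff_add_eq, eq_neg_iff_add_eq_zero, ← h]
      abel
    have ha : B (B x y) z + B (B y z) x + B (B z x) y = 0 := by
      simp only [hBdef]
      simp only [h2']
      simp only [map_sub, map_add, h1, LinearMap.sub_apply, LinearMap.add_apply,
        sub_lie, add_lie]
      rw [← lie_skew x (t z y), ← lie_skew y (t x z), ← lie_skew z (t y x), jac2]
      abel
    have hA : ⁅φ (B x y), φ z⁆ + ⁅φ (B y z), φ x⁆ + ⁅φ (B z x), φ y⁆ = 0 := by
      rw [hkey, hkey, hkey, ← lie_lie, ← lie_lie, ← lie_lie]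
      exact jac (φ x) (φ y) (φ z)
    calc ⁅φ (B x y), φ z⁆ - φ (B (B x y) z) + (⁅φ (B y z), φ x⁆ - φ (B (B y z) x)) +
          (⁅φ (B z x), φ y⁆ - φ (B (B z x) y))
        = (⁅φ (B x y), φ z⁆ + ⁅φ (B y z), φ x⁆ + ⁅φ (B z x), φ y⁆)
          - φ (B (B x y) z + B (B y z) x + B (B z x) y) := by
          simp only [map_add, map_sub]; abel
      _ = 0 := by rw [hA, ha, map_zero, sub_zero]
end

section
/- Let (g, [·,·], ▷) be an inner post-Lie algebra with witness φ (i.e., x▷y = [φ(x),y]) and associated 2-cocycle κ(x,y) = [φ(x),φ(y)] − φ([x,y]_▷). If there exists a linear map t : g → Z(g) such that κ(x,y) = −t([x,y]_▷) for all x,y, then R := φ − t is a Rota-Baxter operator of weight 1 on (g, [·,·]) inducing ▷, i.e., x▷y = [R(x),y]. -/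
/-- If the obstruction 2-cocycle `κ` of an inner post-Lie algebra is a coboundary,
i.e. `κ(x,y) = −s([x,y]_▷)` for a linear map `s` with values in the center, then
`R := φ − s` is a Rota-Baxter operator of weight 1 inducing `▷`. -/
theorem stmt_9 {R L : Type*} [CommRing R] [LieRing L] [LieAlgebra R L]
    (t : L →ₗ[R] L →ₗ[R] L)
    (h1 : ∀ x y z : L, t x ⁅y, z⁆ = ⁅t x y, z⁆ + ⁅y, t x z⁆)
    (h2 : ∀ x y z : L, t (⁅x, y⁆ + t x y - t y x) z = t x (t y z) - t y (t x z))
    (φ : L →ₗ[R] L) (hφ : ∀ x y : L, t x y = ⁅φ x, y⁆)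
    (s : L →ₗ[R] L) (hs : ∀ x z : L, ⁅s x, z⁆ = 0)
    (hcob : ∀ x y : L, ⁅φ x, φ y⁆ - φ (t x y - t y x + ⁅x, y⁆) =
      - s (t x y - t y x + ⁅x, y⁆)) :
    (∀ x y : L, ⁅(φ - s) x, (φ - s) y⁆ =
      (φ - s) (⁅(φ - s) x, y⁆ + ⁅x, (φ - s) y⁆ + ⁅x, y⁆)) ∧
    (∀ x y : L, t x y = ⁅(φ - s) x, y⁆) := by
  have key : ∀ x y : L, ⁅(φ - s) x, y⁆ = ⁅φ x, y⁆ := by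
    intro x y
    simp [LinearMap.sub_apply, sub_lie, hs]
  refine ⟨fun x y => ?_, fun x y => by rw [key, hφ]⟩
  have h := hcob x y
  have hxy : ⁅(φ - s) x, y⁆ + ⁅x, (φ - s) y⁆ + ⁅x, y⁆ = t x y - t y x + ⁅x, y⁆ := by
    rw [key, ← lie_skew x, key, hφ, hφ]; abel
  have hbr : ⁅(φ - s) x, (φ - s) y⁆ = ⁅φ x, φ y⁆ := by
    rw [key, LinearMap.sub_apply, lie_sub]
    rw [show ⁅φ x, s y⁆ = -⁅s y, φ x⁆ from (neg_eq_iff_eq_neg.mpr (lie_skew _ _).symm).symm, hs]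
    abel
  rw [hbr, hxy, LinearMap.sub_apply]
  rw [sub_eq_add_neg, ← h]; abel
end

section
/- Let (g, [·,·], ▷) be a post-Lie algebra such that (g, [·,·]) is a complete Lie algebra (zero center and every derivation is inner). Then (g, [·,·], ▷) is inner and is induced by a Rota-Baxter operator of weight 1: any linear map φ with x▷y = [φ(x),y] for all x,y is itself a Rota-Baxter operator of weight 1. -/
/-- If `(g,[·,·])` is a complete Lie algebra (trivial center, every derivation inner),
then every post-Lie structure on it is inner, and any witness `φ` with
`x ▷ y = ⁅φ x, y⁆` is itself a Rota-Baxter operator of weight 1. -/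
theorem stmt_10 {R L : Type*} [CommRing R] [LieRing L] [LieAlgebra R L]
    (t : L →ₗ[R] L →ₗ[R] L)
    (h1 : ∀ x y z : L, t x ⁅y, z⁆ = ⁅t x y, z⁆ + ⁅y, t x z⁆)
    (h2 : ∀ x y z : L, t (⁅x, y⁆ + t x y - t y x) z = t x (t y z) - t y (t x z))
    (hcenter : ∀ z : L, (∀ w : L, ⁅z, w⁆ = 0) → z = 0)
    (hinner : ∀ D : LieDerivation R L L, ∃ a : L, ∀ y : L, D y = ⁅a, y⁆) :
    (∃ φ : L →ₗ[R] L, ∀ x y : L, t x y = ⁅φ x, y⁆) ∧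
    (∀ φ : L →ₗ[R] L, (∀ x y : L, t x y = ⁅φ x, y⁆) →
      ∀ x y : L, ⁅φ x, φ y⁆ = φ (⁅φ x, y⁆ + ⁅x, φ y⁆ + ⁅x, y⁆)) := by
  constructor
  · -- build the derivation for each x
    have hD : ∀ x : L, ∃ a : L, ∀ y : L, t x y = ⁅a, y⁆ := by
      intro x
      have := hinner ⟨t x, fun a b => by
        have := h1 x a b
        rw [this]
        rw [← lie_skew b (t x a)]
        abel⟩
      obtain ⟨a, ha⟩ := this
      exact ⟨a, fun y => ha y⟩
    choose f hf using hD
    have key : ∀ x y : L, (∀ w : L, ⁅x - y, w⁆ = 0) → x = y := by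
      intro x y h
      exact sub_eq_zero.mp (hcenter _ h)
    have hadd : ∀ x y : L, f (x + y) = f x + f y := by
      intro x y
      apply key
      intro w
      have h := hf (x + y) w
      rw [map_add, LinearMap.add_apply, hf x w, hf y w] at h
      rw [sub_lie, add_lie, ← h]
      abel
    have hsmul : ∀ (c : R) (x : L), f (c • x) = c • f x := by
      intro c x
      apply key
      intro w
      have h := hf (c • x) w
      rw [map_smul, LinearMap.smul_apply, hf x w] at h
      rw [sub_lie, smul_lie, ← h]
      abel
    exact ⟨⟨⟨f, fun a b => hadd a b⟩, fun c a => hsmul c a⟩, fun x y => hf x y⟩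
  · intro φ hφ x y
    have key := h2 x y
    have hz : ∀ z : L, ⁅⁅φ x, φ y⁆ - φ (⁅φ x, y⁆ + ⁅x, φ y⁆ + ⁅x, y⁆), z⁆ = 0 := by
      intro z
      have h := key z
      rw [hφ x y, hφ y x] at h
      have harg : (⁅x, y⁆ + ⁅φ x, y⁆ - ⁅φ y, x⁆) = ⁅φ x, y⁆ + ⁅x, φ y⁆ + ⁅x, y⁆ := by
        rw [← lie_skew x (φ y)]; abel
      rw [harg, hφ] at h
      simp only [hφ] at h
      rw [sub_lie, h, lie_lie]
      abel
    have := hcenter _ hz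
    rw [sub_eq_zero] at this
    exact this
end

section
/- Let (G, ·, ▷) be a post-group. Define a ∘ b := a · (a ▷ b). Then (G, ∘) is a group, with the same identity element as (G, ·). -/
/-!
Since `r a` is an endomorphism of `(G, ·)`, `a ∘ 1 = a · (a ▷ 1) = a`, and the post-group axiom
applied to `1 ∘ 1 = 1` gives `1 ▷ (1 ▷ c) = 1 ▷ c`, so `1 ▷ -` is the identity by injectivity.
Associativity of `∘` is the post-group axiom pushed through the endomorphism `a ▷ -`.
Surjectivity of `a ▷ -` yields right inverses for `∘`, and in an associative operation with
identity in which every element has a right inverse, right inverses are also left inverses.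
-/

theorem op_eq_of_op_eq_of_forall_exists_right_inv {M : Type*} (op : M → M → M) (e : M)
    (assoc : ∀ a b c, op (op a b) c = op a (op b c))
    (op_e : ∀ a, op a e = a) (e_op : ∀ a, op e a = a)
    (right_inv : ∀ a, ∃ b, op a b = e) {a b : M} (hab : op a b = e) : op b a = e := by
  obtain ⟨c, hbc⟩ := right_inv b
  calc op b a = op (op b a) (op b c) := by rw [hbc, op_e]
    _ = op b (op (op a b) c) := by rw [assoc, ← assoc a]
    _ = e := by rw [hab, e_op, hbc]

namespace PostGroup

variable {G : Type*} [Group G] {r : G → G → G}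

/-- `a ∘ b := a · (a ▷ b)`, writing `r a b` for `a ▷ b`. -/
def postMul (r : G → G → G) (a b : G) : G := a * r a b

theorem post_one_right (hmul : ∀ a b c : G, r a (b * c) = r a b * r a c) (a : G) :
    r a 1 = 1 :=
  mul_eq_left.mp (by rw [← hmul, one_mul])

theorem post_one_left (hinj : Function.Injective (r 1))
    (hmul : ∀ a b c : G, r a (b * c) = r a b * r a c)
    (hassoc : ∀ a b c : G, r (a * r a b) c = r a (r b c)) (a : G) : r 1 a = a :=
  hinj <| by simpa [post_one_right hmul] using (hassoc 1 1 a).symm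

theorem postMul_one (hmul : ∀ a b c : G, r a (b * c) = r a b * r a c) (a : G) :
    postMul r a 1 = a := by
  rw [postMul, post_one_right hmul, mul_one]

theorem one_postMul (hinj : Function.Injective (r 1))
    (hmul : ∀ a b c : G, r a (b * c) = r a b * r a c)
    (hassoc : ∀ a b c : G, r (a * r a b) c = r a (r b c)) (a : G) :
    postMul r 1 a = a := by
  rw [postMul, post_one_left hinj hmul hassoc, one_mul]

theorem postMul_assoc (hmul : ∀ a b c : G, r a (b * c) = r a b * r a c)
    (hassoc : ∀ a b c : G, r (a * r a b) c = r a (r b c)) (a b c : G) :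
    postMul r (postMul r a b) c = postMul r a (postMul r b c) := by
  simp only [postMul]
  rw [mul_assoc, hassoc, ← hmul]

theorem exists_postMul_eq_one (hsurj : ∀ a : G, Function.Surjective (r a)) (a : G) :
    ∃ b, postMul r a b = 1 := by
  obtain ⟨b, hb⟩ := hsurj a a⁻¹
  exact ⟨b, by rw [postMul, hb, mul_inv_cancel]⟩

end PostGroup

open PostGroup in
/-- For a post-group `(G, ·, ▷)`, the operation `a ∘ b := a · (a ▷ b)` makes `G` a
group with the same identity element as `(G, ·)`: `∘` is associative, `1` is a
two-sided identity, and every element has a two-sided inverse. -/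
theorem stmt_11 {G : Type*} [Group G] (r : G → G → G)
    (haut : ∀ a : G, Function.Bijective (r a))
    (hmul : ∀ a b c : G, r a (b * c) = r a b * r a c)
    (hassoc : ∀ a b c : G, r (a * r a b) c = r a (r b c)) :
    (∀ a b c : G, (a * r a b) * r (a * r a b) c = a * r a (b * r b c)) ∧
    (∀ a : G, a * r a 1 = a) ∧
    (∀ a : G, 1 * r 1 a = a) ∧
    (∀ a : G, ∃ b : G, a * r a b = 1 ∧ b * r b a = 1) := by
  have right_inv := exists_postMul_eq_one fun a => (haut a).2
  refine ⟨postMul_assoc hmul hassoc, postMul_one hmul,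
    one_postMul (haut 1).1 hmul hassoc, fun a => ?_⟩
  obtain ⟨b, hab⟩ := right_inv a
  exact ⟨b, hab, op_eq_of_op_eq_of_forall_exists_right_inv (postMul r) 1
    (postMul_assoc hmul hassoc) (postMul_one hmul) (one_postMul (haut 1).1 hmul hassoc)
    right_inv hab⟩
end

section
/- Let (G, ·) be a group and B : G → G a Rota-Baxter operator, i.e., B(a)·B(b) = B(a · B(a)·b·B(a)⁻¹) for all a,b. Then (G, ·, ▷_B) is a post-group, where a ▷_B b := B(a)·b·B(a)⁻¹. -/
/-- A Rota-Baxter operator `B` on a group `(G,·)` induces a post-group structure via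
`a ▷_B b := B(a)·b·B(a)⁻¹`: each left multiplication is an automorphism of `(G,·)`
and the weighted associativity holds. -/
theorem stmt_14 {G : Type*} [Group G] (B : G → G)
    (hB : ∀ a b : G, B a * B b = B (a * (B a * b * (B a)⁻¹))) :
    (∀ a : G, Function.Bijective (fun b : G => B a * b * (B a)⁻¹)) ∧
    (∀ a b c : G, B a * (b * c) * (B a)⁻¹ =
      (B a * b * (B a)⁻¹) * (B a * c * (B a)⁻¹)) ∧
    (∀ a b c : G, B (a * (B a * b * (B a)⁻¹)) * c * (B (a * (B a * b * (B a)⁻¹)))⁻¹ =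
      B a * (B b * c * (B b)⁻¹) * (B a)⁻¹) := by
  refine ⟨fun a => ⟨fun x y h => ?_, fun y => ⟨(B a)⁻¹ * y * B a, by group⟩⟩,
    fun a b c => by group, fun a b c => ?_⟩
  · simpa using congrArg (fun z => (B a)⁻¹ * z * B a) h
  · rw [← hB a b]; group
end

section
/- Let (G, ·) be a group and B₁, B₂ two Rota-Baxter operators on it. Then B₁(a)·b·B₁(a)⁻¹ = B₂(a)·b·B₂(a)⁻¹ for all a,b ∈ G if and only if the map ζ(a) := B₁(a)⁻¹·B₂(a) takes values in the center Z(G) and satisfies ζ(a ∘ b) = ζ(a)·ζ(b) for all a,b, where a ∘ b = a·B₁(a)·b·B₁(a)⁻¹. -/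
/-- Two Rota-Baxter operators `B₁, B₂` on a group induce the same conjugation
(post-group) operation iff `ζ(a) := B₁(a)⁻¹·B₂(a)` takes values in the center
and is a homomorphism from the sub-adjacent group `(G,∘)` (a ∘ b = a·B₁(a)·b·B₁(a)⁻¹)
to `(G,·)` (i.e. a 1-cocycle with values in the trivial module `Z(G)`). -/
theorem stmt_16 {G : Type*} [Group G] (B₁ B₂ : G → G)
    (hB₁ : ∀ a b : G, B₁ a * B₁ b = B₁ (a * (B₁ a * b * (B₁ a)⁻¹)))
    (hB₂ : ∀ a b : G, B₂ a * B₂ b = B₂ (a * (B₂ a * b * (B₂ a)⁻¹))) :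
    (∀ a b : G, B₁ a * b * (B₁ a)⁻¹ = B₂ a * b * (B₂ a)⁻¹) ↔
    ((∀ a c : G, ((B₁ a)⁻¹ * B₂ a) * c = c * ((B₁ a)⁻¹ * B₂ a)) ∧
     (∀ a b : G, (B₁ (a * B₁ a * b * (B₁ a)⁻¹))⁻¹ * B₂ (a * B₁ a * b * (B₁ a)⁻¹) =
       ((B₁ a)⁻¹ * B₂ a) * ((B₁ b)⁻¹ * B₂ b))) := by
  constructor
  · intro h
    have key : ∀ a c : G, ((B₁ a)⁻¹ * B₂ a) * c = c * ((B₁ a)⁻¹ * B₂ a) := by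
      intro a c
      have h1 := h a c
      have h2 : B₁ a * c * (B₁ a)⁻¹ * B₂ a = B₂ a * c := by rw [h1]; group
      calc (B₁ a)⁻¹ * B₂ a * c = (B₁ a)⁻¹ * (B₂ a * c) := by group
        _ = (B₁ a)⁻¹ * (B₁ a * c * (B₁ a)⁻¹ * B₂ a) := by rw [h2]
        _ = c * ((B₁ a)⁻¹ * B₂ a) := by group
    refine ⟨key, fun a b => ?_⟩
    have harg : a * B₁ a * b * (B₁ a)⁻¹ = a * (B₁ a * b * (B₁ a)⁻¹) := by group
    rw [harg, ← hB₁ a b, h a b, ← hB₂ a b]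
    calc (B₁ a * B₁ b)⁻¹ * (B₂ a * B₂ b)
        = (B₁ b)⁻¹ * ((B₁ a)⁻¹ * B₂ a * B₂ b) := by group
      _ = (B₁ b)⁻¹ * (B₂ b * ((B₁ a)⁻¹ * B₂ a)) := by rw [key a (B₂ b)]
      _ = ((B₁ b)⁻¹ * B₂ b) * ((B₁ a)⁻¹ * B₂ a) := by group
      _ = ((B₁ a)⁻¹ * B₂ a) * ((B₁ b)⁻¹ * B₂ b) := key b _
  · rintro ⟨hc, -⟩ a b
    calc B₁ a * b * (B₁ a)⁻¹
        = B₁ a * (b * ((B₁ a)⁻¹ * B₂ a) * ((B₁ a)⁻¹ * B₂ a)⁻¹) * (B₁ a)⁻¹ := by group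
      _ = B₁ a * ((B₁ a)⁻¹ * B₂ a * b * ((B₁ a)⁻¹ * B₂ a)⁻¹) * (B₁ a)⁻¹ := by
          rw [hc a b]
      _ = B₂ a * b * (B₂ a)⁻¹ := by group
end

section
/- Let (G, ·, ▷) be an inner post-group with witness Φ : G → G, i.e., a▷b = Φ(a)·b·Φ(a)⁻¹ for all a,b, and let ∘ be the sub-adjacent operation a∘b = a·(a▷b). Define ω(a,b) := Φ(b)⁻¹·Φ(a)⁻¹·Φ(a∘b). Then ω takes values in the center Z(G) and satisfies the 2-cocycle identity ω(b,c)·ω(a, b∘c) = ω(a,b)·ω(a∘b, c) for all a,b,c ∈ G. -/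
/-- For an inner post-group with witness `Φ` (`a▷b = Φ(a)·b·Φ(a)⁻¹`) and sub-adjacent
operation `a∘b = a·(a▷b)`, the map `ω(a,b) = Φ(b)⁻¹·Φ(a)⁻¹·Φ(a∘b)` takes values in
the center `Z(G)` and satisfies the 2-cocycle identity
`ω(b,c)·ω(a,b∘c) = ω(a,b)·ω(a∘b,c)`. -/
theorem stmt_17 {G : Type*} [Group G] (r : G → G → G)
    (haut : ∀ a : G, Function.Bijective (r a))
    (hmul : ∀ a b c : G, r a (b * c) = r a b * r a c)
    (hassoc : ∀ a b c : G, r (a * r a b) c = r a (r b c))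
    (Φ : G → G) (hΦ : ∀ a b : G, r a b = Φ a * b * (Φ a)⁻¹) :
    (∀ a b c : G,
      ((Φ b)⁻¹ * (Φ a)⁻¹ * Φ (a * r a b)) * c =
        c * ((Φ b)⁻¹ * (Φ a)⁻¹ * Φ (a * r a b))) ∧
    (∀ a b c : G,
      ((Φ c)⁻¹ * (Φ b)⁻¹ * Φ (b * r b c)) *
        ((Φ (b * r b c))⁻¹ * (Φ a)⁻¹ * Φ (a * r a (b * r b c))) =
      ((Φ b)⁻¹ * (Φ a)⁻¹ * Φ (a * r a b)) *
        ((Φ c)⁻¹ * (Φ (a * r a b))⁻¹ * Φ ((a * r a b) * r (a * r a b) c))) := by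
  have key : ∀ a b c : G,
      ((Φ b)⁻¹ * (Φ a)⁻¹ * Φ (a * r a b)) * c =
        c * ((Φ b)⁻¹ * (Φ a)⁻¹ * Φ (a * r a b)) := by
    intro a b c
    have h := hassoc a b c
    rw [hΦ (a * r a b) c, hΦ b c, hΦ a (Φ b * c * (Φ b)⁻¹)] at h
    -- h : Φ(a∘b)*c*(Φ(a∘b))⁻¹ = Φ a*(Φ b*c*(Φ b)⁻¹)*(Φ a)⁻¹
    have h2 : Φ (a * r a b) * c =
        Φ a * (Φ b * c * (Φ b)⁻¹) * (Φ a)⁻¹ * Φ (a * r a b) := by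
      rw [← h]; group
    calc ((Φ b)⁻¹ * (Φ a)⁻¹ * Φ (a * r a b)) * c
        = (Φ b)⁻¹ * (Φ a)⁻¹ * (Φ (a * r a b) * c) := by group
      _ = (Φ b)⁻¹ * (Φ a)⁻¹ * (Φ a * (Φ b * c * (Φ b)⁻¹) * (Φ a)⁻¹ * Φ (a * r a b)) := by
          rw [h2]
      _ = c * ((Φ b)⁻¹ * (Φ a)⁻¹ * Φ (a * r a b)) := by group
  refine ⟨key, ?_⟩
  intro a b c
  have hop : (a * r a b) * r (a * r a b) c = a * r a (b * r b c) := by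
    rw [hassoc, hmul, mul_assoc]
  rw [hop]
  -- LHS telescopes; RHS: use centrality of ω(a,b)
  have hc := key a b ((Φ c)⁻¹)
  calc ((Φ c)⁻¹ * (Φ b)⁻¹ * Φ (b * r b c)) *
        ((Φ (b * r b c))⁻¹ * (Φ a)⁻¹ * Φ (a * r a (b * r b c)))
      = (Φ c)⁻¹ * ((Φ b)⁻¹ * ((Φ a)⁻¹ * Φ (a * r a (b * r b c)))) := by group
    _ = (Φ c)⁻¹ * (((Φ b)⁻¹ * (Φ a)⁻¹ * Φ (a * r a b)) * ((Φ (a * r a b))⁻¹ *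
          Φ (a * r a (b * r b c)))) := by group
    _ = ((Φ b)⁻¹ * (Φ a)⁻¹ * Φ (a * r a b)) *
        ((Φ c)⁻¹ * (Φ (a * r a b))⁻¹ * Φ (a * r a (b * r b c))) := by
        rw [← mul_assoc, ← hc]; group
end

section
/- Let (G, ·, ▷) be an inner post-group with witness Φ (a▷b = Φ(a)·b·Φ(a)⁻¹), sub-adjacent operation a∘b = a·(a▷b), and 2-cocycle ω(a,b) = Φ(b)⁻¹·Φ(a)⁻¹·Φ(a∘b). If there exists a map ζ : G → Z(G) such that ω(a,b) = ζ(a)·ζ(b)·ζ(a∘b)⁻¹ for all a,b, then B(a) := Φ(a)·ζ(a) is a Rota-Baxter operator on (G,·) inducing ▷, i.e., a▷b = B(a)·b·B(a)⁻¹ and B(a∘b) = B(a)·B(b). -/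
/-- If the obstruction 2-cocycle `ω` of an inner post-group is a coboundary, i.e.
`ω(a,b) = ζ(a)·ζ(b)·ζ(a∘b)⁻¹` for a map `ζ` with values in the center, then
`B(a) := Φ(a)·ζ(a)` is a Rota-Baxter operator on `(G,·)` inducing `▷`. -/
theorem stmt_18 {G : Type*} [Group G] (r : G → G → G)
    (haut : ∀ a : G, Function.Bijective (r a))
    (hmul : ∀ a b c : G, r a (b * c) = r a b * r a c)
    (hassoc : ∀ a b c : G, r (a * r a b) c = r a (r b c))
    (Φ : G → G) (hΦ : ∀ a b : G, r a b = Φ a * b * (Φ a)⁻¹)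
    (ζ : G → G) (hζ : ∀ a c : G, ζ a * c = c * ζ a)
    (hcob : ∀ a b : G, (Φ b)⁻¹ * (Φ a)⁻¹ * Φ (a * r a b) =
      ζ a * ζ b * (ζ (a * r a b))⁻¹) :
    (∀ a b : G, r a b = (Φ a * ζ a) * b * (Φ a * ζ a)⁻¹) ∧
    (∀ a b : G, Φ (a * r a b) * ζ (a * r a b) = (Φ a * ζ a) * (Φ b * ζ b)) ∧
    (∀ a b : G, (Φ a * ζ a) * (Φ b * ζ b) =
      Φ (a * ((Φ a * ζ a) * b * (Φ a * ζ a)⁻¹)) *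
        ζ (a * ((Φ a * ζ a) * b * (Φ a * ζ a)⁻¹))) := by
  have h1 : ∀ a b : G, r a b = (Φ a * ζ a) * b * (Φ a * ζ a)⁻¹ := by
    intro a b
    have e : Φ a * ζ a * b * (Φ a * ζ a)⁻¹ = Φ a * b * (Φ a)⁻¹ := by
      rw [mul_inv_rev, mul_assoc (Φ a) (ζ a) b, hζ a b]
      group
    rw [hΦ, e]
  have h2 : ∀ a b : G, Φ (a * r a b) * ζ (a * r a b) = (Φ a * ζ a) * (Φ b * ζ b) := by
    intro a b
    have e : Φ (a * r a b) = Φ a * Φ b * (ζ a * ζ b * (ζ (a * r a b))⁻¹) := by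
      rw [← hcob a b]; group
    rw [e]
    have c1 : ζ a * Φ b = Φ b * ζ a := hζ a (Φ b)
    conv_rhs => rw [← mul_assoc, mul_assoc (Φ a), c1]
    group
  refine ⟨h1, h2, fun a b => ?_⟩
  rw [← h1 a b, h2 a b]
end
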